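/- arXiv:2407.19741 — 2 statements merged into one kernel-verified Lean document; each statement's English description precedes it below -/
import Mathlib

section
/- Let φ : [0,∞) → [0,∞) be a measurable probability density with ∫_0^∞ φ(s) ds = 1 and finite positive mean m = ∫_0^∞ s φ(s) ds ∈ (0,∞). Let (a_T)_{T>0} satisfy a_T > 1 for all T and lim_{T→∞} T(a_T − 1) = λ for a fixed λ > 0, and for each T let b_T > 0 satisfy ∫_0^∞ e^{−b_T s} a_T φ(s) ds = 1/a_T. Then lim_{T→∞} T b_T = 2λ/m. -/
/-!
Write `L(c) = ∫_{(0,∞)} e^{-cs} φ(s) ds`, so that the equation defining `b_T` reads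
`L(b_T) = 1/a_T²`. The elementary bounds `c s e^{-cs} ≤ 1 - e^{-cs} ≤ c s` give
`b_T ∫ s e^{-b_T s} φ(s) ds ≤ 1 - 1/a_T² ≤ b_T m`.
As `L` is antitone with `L(c) < 1` for `c > 0`, while `1/a_T² → 1`, we get `b_T → 0`; by dominated
convergence the integral on the left then tends to `m`. Multiplying by `T` and using
`T (1 - 1/a_T²) = T (a_T - 1)(a_T + 1)/a_T² → 2λ`, both bounds squeeze `T b_T` to `2λ/m`.
-/

open MeasureTheory Filter Topology

open Set Real Function

lemma mul_exp_neg_le_one_sub_exp_neg (x : ℝ) : x * exp (-x) ≤ 1 - exp (-x) := by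
  have h : (x + 1) * exp (-x) ≤ exp x * exp (-x) :=
    mul_le_mul_of_nonneg_right (add_one_le_exp x) (exp_pos _).le
  rw [← exp_add, add_neg_cancel, exp_zero] at h
  linarith

noncomputable def laplaceIoi (μ : Measure ℝ) (f : ℝ → ℝ) (c : ℝ) : ℝ :=
  ∫ s in Ioi 0, exp (-c * s) * f s ∂μ

section Laplace

variable {μ : Measure ℝ} {f : ℝ → ℝ} {c : ℝ}

lemma exp_neg_mul_le_one (hc : 0 ≤ c) {s : ℝ} (hs : s ∈ Ioi (0 : ℝ)) : exp (-c * s) ≤ 1 :=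
  exp_le_one_iff.2 (by nlinarith [mem_Ioi.1 hs])

lemma integrableOn_exp_neg_mul_mul (hf : IntegrableOn f (Ioi 0) μ) (hc : 0 ≤ c) :
    IntegrableOn (fun s => exp (-c * s) * f s) (Ioi 0) μ := by
  refine hf.bdd_mul (c := 1) (by fun_prop) ?_
  filter_upwards [ae_restrict_mem measurableSet_Ioi] with s hs
  rw [norm_of_nonneg (exp_pos _).le]
  exact exp_neg_mul_le_one hc hs

lemma integrableOn_one_sub_exp_neg_mul_mul (hf : IntegrableOn f (Ioi 0) μ) (hc : 0 ≤ c) :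
    IntegrableOn (fun s => (1 - exp (-c * s)) * f s) (Ioi 0) μ := by
  simpa only [sub_mul, one_mul, Pi.sub_def] using hf.sub (integrableOn_exp_neg_mul_mul hf hc)

lemma integral_sub_laplaceIoi (hf : IntegrableOn f (Ioi 0) μ) (hc : 0 ≤ c) :
    ∫ s in Ioi 0, f s ∂μ - laplaceIoi μ f c = ∫ s in Ioi 0, (1 - exp (-c * s)) * f s ∂μ := by
  rw [laplaceIoi, ← integral_sub hf (integrableOn_exp_neg_mul_mul hf hc)]
  simp_rw [sub_mul, one_mul]

lemma laplaceIoi_antitoneOn (hf : IntegrableOn f (Ioi 0) μ) (hf0 : 0 ≤ f) :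
    AntitoneOn (laplaceIoi μ f) (Ici 0) := by
  intro c hc d hd hcd
  refine setIntegral_mono_on (integrableOn_exp_neg_mul_mul hf hd)
    (integrableOn_exp_neg_mul_mul hf hc) measurableSet_Ioi fun s hs => ?_
  gcongr
  · exact hf0 s
  · exact mem_Ioi.1 hs |>.le

lemma laplaceIoi_lt_integral (hf : IntegrableOn f (Ioi 0) μ) (hf0 : 0 ≤ f)
    (hpos : 0 < ∫ s in Ioi 0, f s ∂μ) (hc : 0 < c) :
    laplaceIoi μ f c < ∫ s in Ioi 0, f s ∂μ := by
  have hnonneg : 0 ≤ᵐ[μ.restrict (Ioi 0)] fun s => (1 - exp (-c * s)) * f s := by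
    filter_upwards [ae_restrict_mem measurableSet_Ioi] with s hs
    exact mul_nonneg (sub_nonneg.2 (exp_neg_mul_le_one hc.le hs)) (hf0 s)
  -- the weight `1 - exp (-c s)` vanishes nowhere on `(0, ∞)`
  have hsupport : support (fun s => (1 - exp (-c * s)) * f s) ∩ Ioi 0 = support f ∩ Ioi 0 := by
    ext s
    simp only [mem_inter_iff, mem_support, mem_Ioi, mul_ne_zero_iff]
    constructor
    · exact fun ⟨⟨_, h⟩, hs⟩ => ⟨h, hs⟩
    · refine fun ⟨h, hs⟩ => ⟨⟨?_, h⟩, hs⟩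
      exact (sub_pos.2 (exp_lt_one_iff.2 (by nlinarith))).ne'
  rw [← sub_pos, integral_sub_laplaceIoi hf hc.le,
    setIntegral_pos_iff_support_of_nonneg_ae hnonneg
      (integrableOn_one_sub_exp_neg_mul_mul hf hc.le), hsupport,
    ← setIntegral_pos_iff_support_of_nonneg_ae (.of_forall hf0) hf]
  exact hpos

lemma integral_sub_laplaceIoi_le (hf : IntegrableOn f (Ioi 0) μ) (hf0 : 0 ≤ f)
    (hsf : IntegrableOn (fun s => s * f s) (Ioi 0) μ) (hc : 0 ≤ c) :
    ∫ s in Ioi 0, f s ∂μ - laplaceIoi μ f c ≤ c * ∫ s in Ioi 0, s * f s ∂μ := by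
  rw [integral_sub_laplaceIoi hf hc, ← integral_const_mul]
  refine setIntegral_mono_on (integrableOn_one_sub_exp_neg_mul_mul hf hc) (hsf.const_mul c)
    measurableSet_Ioi fun s _ => ?_
  calc (1 - exp (-c * s)) * f s ≤ (c * s) * f s := by
        gcongr
        · exact hf0 s
        · rw [neg_mul]; linarith [one_sub_le_exp_neg (c * s)]
    _ = c * (s * f s) := mul_assoc _ _ _

lemma mul_laplaceIoi_le_integral_sub (hf : IntegrableOn f (Ioi 0) μ) (hf0 : 0 ≤ f)
    (hsf : IntegrableOn (fun s => s * f s) (Ioi 0) μ) (hc : 0 ≤ c) :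
    c * laplaceIoi μ (fun s => s * f s) c ≤ ∫ s in Ioi 0, f s ∂μ - laplaceIoi μ f c := by
  rw [integral_sub_laplaceIoi hf hc, laplaceIoi, ← integral_const_mul]
  refine setIntegral_mono_on ((integrableOn_exp_neg_mul_mul hsf hc).const_mul c)
    (integrableOn_one_sub_exp_neg_mul_mul hf hc) measurableSet_Ioi fun s _ => ?_
  rw [neg_mul]
  calc c * (exp (-(c * s)) * (s * f s)) = (c * s) * exp (-(c * s)) * f s := by ring
    _ ≤ (1 - exp (-(c * s))) * f s := by
        gcongr
        · exact hf0 s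
        · exact mul_exp_neg_le_one_sub_exp_neg _

lemma tendsto_laplaceIoi {α : Type*} {l : Filter α} [l.IsCountablyGenerated] {c : α → ℝ}
    (hf : IntegrableOn f (Ioi 0) μ) (hc0 : ∀ᶠ x in l, 0 ≤ c x) (hc : Tendsto c l (𝓝 0)) :
    Tendsto (fun x => laplaceIoi μ f (c x)) l (𝓝 (∫ s in Ioi 0, f s ∂μ)) := by
  refine tendsto_integral_filter_of_dominated_convergence (fun s => ‖f s‖) ?_ ?_ hf.norm ?_
  · exact .of_forall fun x => (by fun_prop : Continuous fun s => exp (-c x * s))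
      |>.aestronglyMeasurable.mul hf.aestronglyMeasurable
  · filter_upwards [hc0] with x hx
    filter_upwards [ae_restrict_mem measurableSet_Ioi] with s hs
    rw [norm_mul, norm_of_nonneg (exp_pos _).le]
    exact mul_le_of_le_one_left (norm_nonneg _) (exp_neg_mul_le_one hx hs)
  · refine .of_forall fun s => ?_
    simpa using ((hc.neg.mul_const s).rexp).mul_const (f s)

lemma tendsto_zero_of_tendsto_laplaceIoi {α : Type*} {l : Filter α} {c : α → ℝ}
    (hf : IntegrableOn f (Ioi 0) μ) (hf0 : 0 ≤ f) (hpos : 0 < ∫ s in Ioi 0, f s ∂μ)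
    (hc0 : ∀ᶠ x in l, 0 ≤ c x)
    (hL : Tendsto (fun x => laplaceIoi μ f (c x)) l (𝓝 (∫ s in Ioi 0, f s ∂μ))) :
    Tendsto c l (𝓝 0) := by
  refine tendsto_order.2 ⟨fun ε hε => hc0.mono fun x hx => hε.trans_le hx, fun ε hε => ?_⟩
  filter_upwards [hc0, hL.eventually_const_lt (laplaceIoi_lt_integral hf hf0 hpos hε)]
    with x hx hLx
  by_contra! hεx
  exact (laplaceIoi_antitoneOn hf hf0 hε.le hx hεx).not_gt hLx

end Laplace

lemma tendsto_of_tendsto_mul_sub_one {a : ℝ → ℝ} {lam : ℝ}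
    (h : Tendsto (fun T => T * (a T - 1)) atTop (𝓝 lam)) : Tendsto a atTop (𝓝 1) := by
  have h' : Tendsto (fun T => T * (a T - 1) * T⁻¹ + 1) atTop (𝓝 (lam * 0 + 1)) :=
    (h.mul tendsto_inv_atTop_zero).add_const 1
  rw [mul_zero, zero_add] at h'
  refine h'.congr' ?_
  filter_upwards [eventually_ne_atTop 0] with T hT
  field_simp
  ring

lemma tendsto_mul_one_sub_one_div_sq {a : ℝ → ℝ} {lam : ℝ}
    (h : Tendsto (fun T => T * (a T - 1)) atTop (𝓝 lam)) :
    Tendsto (fun T => T * (1 - 1 / a T ^ 2)) atTop (𝓝 (2 * lam)) := by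
  have ha := tendsto_of_tendsto_mul_sub_one h
  have h2 : Tendsto (fun T => (a T + 1) / a T ^ 2) atTop (𝓝 2) := by
    have h := (ha.add_const 1).div (ha.pow 2) (by norm_num)
    rwa [one_pow, div_one, one_add_one_eq_two] at h
  rw [mul_comm]
  refine (h.mul h2).congr' ?_
  filter_upwards [ha.eventually_ne one_ne_zero] with T hT
  field_simp
  ring

lemma tendsto_of_mul_le_of_le_mul {α : Type*} {l : Filter α} {x g A : α → ℝ} {L m : ℝ}
    (hA : Tendsto A l (𝓝 L)) (hg : Tendsto g l (𝓝 m)) (hm : 0 < m)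
    (hlow : ∀ᶠ t in l, x t * g t ≤ A t) (hup : ∀ᶠ t in l, A t ≤ x t * m) :
    Tendsto x l (𝓝 (L / m)) := by
  refine tendsto_of_tendsto_of_tendsto_of_le_of_le' (hA.div_const m) (hA.div hg hm.ne') ?_ ?_
  · filter_upwards [hup] with t ht
    exact (div_le_iff₀ hm).2 ht
  · filter_upwards [hlow, hg.eventually_const_lt hm] with t ht hgt
    exact (le_div_iff₀ hgt).2 ht

theorem stmt9_general
    (φ : ℝ → ℝ) (hφnonneg : ∀ s, 0 ≤ φ s)
    (hφint : IntegrableOn φ (Set.Ioi 0))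
    (hφ1 : ∫ s in Set.Ioi (0:ℝ), φ s = 1)
    (m : ℝ) (hm : 0 < m)
    (hmint : IntegrableOn (fun s => s * φ s) (Set.Ioi 0))
    (hmval : ∫ s in Set.Ioi (0:ℝ), s * φ s = m)
    (a : ℝ → ℝ) (lam : ℝ)
    (halim : Tendsto (fun T => T * (a T - 1)) atTop (𝓝 lam))
    (b : ℝ → ℝ) (hb : ∀ T > 0, 0 < b T)
    (hbeq : ∀ T > 0,
      ∫ s in Set.Ioi (0:ℝ), Real.exp (-(b T) * s) * (a T * φ s) = 1 / a T) :
    Tendsto (fun T => T * b T) atTop (𝓝 (2 * lam / m)) := by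
  have ha := tendsto_of_tendsto_mul_sub_one halim
  have hb0 : ∀ᶠ T in atTop, 0 ≤ b T := (eventually_gt_atTop 0).mono fun T hT => (hb T hT).le
  have hLb : (fun T => laplaceIoi volume φ (b T)) =ᶠ[atTop] fun T => 1 / a T ^ 2 := by
    filter_upwards [eventually_gt_atTop 0, ha.eventually_ne one_ne_zero] with T hT haT
    have h := hbeq T hT
    simp_rw [mul_left_comm _ (a T), integral_const_mul] at h
    rw [laplaceIoi]
    field_simp at h ⊢
    linarith
  have hbT : Tendsto b atTop (𝓝 0) := by
    refine tendsto_zero_of_tendsto_laplaceIoi hφint hφnonneg (hφ1 ▸ one_pos) hb0 ?_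
    rw [hφ1]
    refine Tendsto.congr' hLb.symm ?_
    simpa using (ha.pow 2).inv₀ (by norm_num)
  have hg := tendsto_laplaceIoi hmint hb0 hbT
  rw [hmval] at hg
  refine tendsto_of_mul_le_of_le_mul (tendsto_mul_one_sub_one_div_sq halim) hg hm ?_ ?_
  · filter_upwards [eventually_gt_atTop 0, hLb] with T hT hL
    have h := mul_laplaceIoi_le_integral_sub hφint hφnonneg hmint (hb T hT).le
    rw [hφ1, hL] at h
    rw [mul_assoc]
    exact mul_le_mul_of_nonneg_left h hT.le
  · filter_upwards [eventually_gt_atTop 0, hLb] with T hT hL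
    have h := integral_sub_laplaceIoi_le hφint hφnonneg hmint (hb T hT).le
    rw [hφ1, hL, hmval] at h
    rw [mul_assoc]
    exact mul_le_mul_of_nonneg_left h hT.le

theorem stmt9
    (φ : ℝ → ℝ) (hφmeas : Measurable φ) (hφnonneg : ∀ s, 0 ≤ φ s)
    (hφneg : ∀ s < (0:ℝ), φ s = 0)
    (hφint : IntegrableOn φ (Set.Ioi 0))
    (hφ1 : ∫ s in Set.Ioi (0:ℝ), φ s = 1)
    (m : ℝ) (hm : 0 < m)
    (hmint : IntegrableOn (fun s => s * φ s) (Set.Ioi 0))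
    (hmval : ∫ s in Set.Ioi (0:ℝ), s * φ s = m)
    (a : ℝ → ℝ) (ha : ∀ T > 0, 1 < a T)
    (lam : ℝ) (hlam : 0 < lam)
    (halim : Tendsto (fun T => T * (a T - 1)) atTop (𝓝 lam))
    (b : ℝ → ℝ) (hb : ∀ T > 0, 0 < b T)
    (hbeq : ∀ T > 0,
      ∫ s in Set.Ioi (0:ℝ), Real.exp (-(b T) * s) * (a T * φ s) = 1 / a T) :
    Tendsto (fun T => T * b T) atTop (𝓝 (2 * lam / m)) :=
  stmt9_general φ hφnonneg hφint hφ1 m hm hmint hmval a lam halim b hb hbeq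
end

section
/- Let A ∈ ℝ and let φ : [0,∞) → [0,∞) be locally integrable. Then the function t ↦ ∑_{n≥1} |A|^n ∫_0^t φ^{*n}(s) ds is finite for every t ≥ 0 and locally bounded on [0,∞). -/
/-!
Weighting by `e^{-Ls}` commutes with convolution on `[0, ∞)`:
`e^{-Lt} φ^{*n}(t) = (e^{-L·} φ)^{*n}(t)`. For nonnegative `f, g`, Tonelli and translation
invariance give `∫_0^T (f * g) ≤ (∫_0^T f) (∫_0^T g)`, hence
`∫_0^T φ^{*(n+1)} ≤ e^{LT} ρ_L^(n+1)` with `ρ_L = ∫_0^T e^{-Ls} φ(s) ds`. By dominated convergence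
`ρ_L → 0` as `L → ∞`, so for `L` with `|A| ρ_L < 1` the series is dominated by a geometric one.
It is bounded on `[0, t]` by its value at `t`, since every term is nondecreasing in the upper limit.
-/

open MeasureTheory Filter Topology

/-- Convolution powers: `convPow ψ n = ψ^{*(n+1)}`, i.e. `convPow ψ 0 = ψ` and
`convPow ψ (n+1) t = ∫_0^t ψ(t-s) ψ^{*(n+1)}(s) ds`. -/
noncomputable def convPow (ψ : ℝ → ℝ) : ℕ → ℝ → ℝ
  | 0 => ψ
  | n + 1 => fun t => ∫ s in (0:ℝ)..t, ψ (t - s) * convPow ψ n s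

open Set
open scoped ENNReal

lemma ofReal_integral_le_lintegral_ofReal {α : Type*} [MeasurableSpace α] {μ : Measure α}
    {f : α → ℝ} (hf : 0 ≤ᵐ[μ] f) :
    ENNReal.ofReal (∫ x, f x ∂μ) ≤ ∫⁻ x, ENNReal.ofReal (f x) ∂μ := by
  by_cases hfi : Integrable f μ
  · exact (ofReal_integral_eq_lintegral_ofReal hfi hf).le
  · simp [integral_undef hfi]

lemma measurable_intervalIntegral_of_measurable_uncurry {F : ℝ → ℝ → ℝ}
    (hF : Measurable (Function.uncurry F)) (a : ℝ) :
    Measurable fun t => ∫ s in a..t, F t s := by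
  have hS₁ : MeasurableSet {p : ℝ × ℝ | p.2 ∈ Ioc a p.1} :=
    (measurableSet_lt measurable_const measurable_snd).inter
      (measurableSet_le measurable_snd measurable_fst)
  have hS₂ : MeasurableSet {p : ℝ × ℝ | p.2 ∈ Ioc p.1 a} :=
    (measurableSet_lt measurable_fst measurable_snd).inter
      (measurableSet_le measurable_snd measurable_const)
  have key : ∀ t, ∫ s in a..t, F t s =
      (∫ s, {p : ℝ × ℝ | p.2 ∈ Ioc a p.1}.indicator (Function.uncurry F) (t, s)) -
        ∫ s, {p : ℝ × ℝ | p.2 ∈ Ioc p.1 a}.indicator (Function.uncurry F) (t, s) := by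
    intro t
    rw [intervalIntegral, ← integral_indicator measurableSet_Ioc,
      ← integral_indicator measurableSet_Ioc]
    rfl
  simp_rw [key]
  exact ((hF.indicator hS₁).stronglyMeasurable.integral_prod_right'.sub
    (hF.indicator hS₂).stronglyMeasurable.integral_prod_right').measurable

lemma measurable_convPow {ψ : ℝ → ℝ} (hψ : Measurable ψ) (n : ℕ) :
    Measurable (convPow ψ n) := by
  induction n with
  | zero => exact hψ
  | succ n ih =>
    exact measurable_intervalIntegral_of_measurable_uncurry
      (F := fun t s => ψ (t - s) * convPow ψ n s)
      ((hψ.comp (measurable_fst.sub measurable_snd)).mul (ih.comp measurable_snd)) 0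

lemma convPow_nonneg {ψ : ℝ → ℝ} (hψ : ∀ s, 0 ≤ ψ s) (n : ℕ) {t : ℝ} (ht : 0 ≤ t) :
    0 ≤ convPow ψ n t := by
  induction n generalizing t with
  | zero => exact hψ t
  | succ n ih =>
    exact intervalIntegral.integral_nonneg ht fun s hs => mul_nonneg (hψ _) (ih hs.1)

lemma convPow_exp_neg_mul (ψ : ℝ → ℝ) (L : ℝ) (n : ℕ) (t : ℝ) :
    convPow (fun s => Real.exp (-L * s) * ψ s) n t = Real.exp (-L * t) * convPow ψ n t := by
  induction n generalizing t with
  | zero => rfl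
  | succ n ih =>
    simp only [convPow, ih, ← intervalIntegral.integral_const_mul]
    refine intervalIntegral.integral_congr fun s _ => ?_
    rw [show -L * t = -L * (t - s) + -L * s by ring, Real.exp_add]
    ring

lemma setLIntegral_Ioc_conv_le {f g : ℝ → ℝ≥0∞} (hf : Measurable f) (hg : Measurable g) (T : ℝ) :
    ∫⁻ t in Ioc 0 T, ∫⁻ s in Ioc 0 t, f (t - s) * g s ≤
      (∫⁻ t in Ioc 0 T, f t) * ∫⁻ s in Ioc 0 T, g s := by
  set f₀ := (Ico 0 T).indicator f with hf₀_def
  have hinner : ∀ t ∈ Ioc (0 : ℝ) T,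
      ∫⁻ s in Ioc 0 t, f (t - s) * g s ≤ ∫⁻ s in Ioc 0 T, f₀ (t - s) * g s := by
    intro t ht
    calc ∫⁻ s in Ioc 0 t, f (t - s) * g s = ∫⁻ s in Ioc 0 t, f₀ (t - s) * g s := by
          refine setLIntegral_congr_fun measurableSet_Ioc fun s hs => ?_
          rw [hf₀_def, indicator_of_mem (show t - s ∈ Ico 0 T from
            ⟨by linarith [hs.2], by linarith [hs.1, ht.2]⟩)]
      _ ≤ ∫⁻ s in Ioc 0 T, f₀ (t - s) * g s := lintegral_mono_set (Ioc_subset_Ioc_right ht.2)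
  have hf₀ : Measurable f₀ := hf.indicator measurableSet_Ico
  calc ∫⁻ t in Ioc 0 T, ∫⁻ s in Ioc 0 t, f (t - s) * g s
      ≤ ∫⁻ t, ∫⁻ s in Ioc 0 T, f₀ (t - s) * g s :=
        (setLIntegral_mono' measurableSet_Ioc hinner).trans (setLIntegral_le_lintegral _ _)
    _ = ∫⁻ s in Ioc 0 T, ∫⁻ t, f₀ (t - s) * g s :=
        lintegral_lintegral_swap
          ((hf₀.comp (measurable_fst.sub measurable_snd)).mul (hg.comp measurable_snd)).aemeasurable
    _ = ∫⁻ s in Ioc 0 T, (∫⁻ t in Ioc 0 T, f t) * g s := by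
        refine lintegral_congr fun s => ?_
        rw [lintegral_mul_const (f := fun t => f₀ (t - s)) _ (hf₀.comp (measurable_sub_const s)),
          lintegral_sub_right_eq_self f₀ s, lintegral_indicator measurableSet_Ico,
          setLIntegral_congr Ico_ae_eq_Ioc]
    _ = (∫⁻ t in Ioc 0 T, f t) * ∫⁻ s in Ioc 0 T, g s := lintegral_const_mul _ hg

lemma ofReal_convPow_succ_le {ψ : ℝ → ℝ} (hψ₀ : ∀ s, 0 ≤ ψ s) (n : ℕ) {t : ℝ} (ht : 0 ≤ t) :
    ENNReal.ofReal (convPow ψ (n + 1) t) ≤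
      ∫⁻ s in Ioc 0 t, ENNReal.ofReal (ψ (t - s)) * ENNReal.ofReal (convPow ψ n s) := by
  have hnonneg : 0 ≤ᵐ[volume.restrict (Ioc 0 t)] fun s => ψ (t - s) * convPow ψ n s :=
    (ae_restrict_iff' measurableSet_Ioc).2 <| Eventually.of_forall fun s hs =>
      mul_nonneg (hψ₀ _) (convPow_nonneg hψ₀ n hs.1.le)
  calc ENNReal.ofReal (convPow ψ (n + 1) t)
      = ENNReal.ofReal (∫ s in Ioc 0 t, ψ (t - s) * convPow ψ n s) := by
        rw [← intervalIntegral.integral_of_le ht]; rfl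
    _ ≤ ∫⁻ s in Ioc 0 t, ENNReal.ofReal (ψ (t - s) * convPow ψ n s) :=
        ofReal_integral_le_lintegral_ofReal hnonneg
    _ = ∫⁻ s in Ioc 0 t, ENNReal.ofReal (ψ (t - s)) * ENNReal.ofReal (convPow ψ n s) := by
        simp_rw [ENNReal.ofReal_mul (hψ₀ _)]

lemma setLIntegral_convPow_le {ψ : ℝ → ℝ} (hψ : Measurable ψ) (hψ₀ : ∀ s, 0 ≤ ψ s)
    (T : ℝ) (n : ℕ) :
    ∫⁻ s in Ioc 0 T, ENNReal.ofReal (convPow ψ n s) ≤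
      (∫⁻ s in Ioc 0 T, ENNReal.ofReal (ψ s)) ^ (n + 1) := by
  induction n with
  | zero => simp [convPow]
  | succ n ih =>
    calc ∫⁻ t in Ioc 0 T, ENNReal.ofReal (convPow ψ (n + 1) t)
        ≤ ∫⁻ t in Ioc 0 T, ∫⁻ s in Ioc 0 t,
            ENNReal.ofReal (ψ (t - s)) * ENNReal.ofReal (convPow ψ n s) :=
          setLIntegral_mono' measurableSet_Ioc fun t ht => ofReal_convPow_succ_le hψ₀ n ht.1.le
      _ ≤ (∫⁻ s in Ioc 0 T, ENNReal.ofReal (ψ s)) *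
            ∫⁻ s in Ioc 0 T, ENNReal.ofReal (convPow ψ n s) :=
          setLIntegral_Ioc_conv_le hψ.ennreal_ofReal (measurable_convPow hψ n).ennreal_ofReal T
      _ ≤ (∫⁻ s in Ioc 0 T, ENNReal.ofReal (ψ s)) ^ (n + 2) := by
          rw [pow_succ' _ (n + 1)]
          gcongr

lemma intervalIntegrable_convPow {ψ : ℝ → ℝ} (hψ : Measurable ψ) (hψ₀ : ∀ s, 0 ≤ ψ s)
    {T : ℝ} (hT : 0 ≤ T) (hint : IntervalIntegrable ψ volume 0 T) (n : ℕ) :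
    IntervalIntegrable (convPow ψ n) volume 0 T := by
  rw [intervalIntegrable_iff_integrableOn_Ioc_of_le hT] at hint ⊢
  refine ⟨(measurable_convPow hψ n).aestronglyMeasurable, ?_⟩
  rw [hasFiniteIntegral_iff_ofReal ((ae_restrict_iff' measurableSet_Ioc).2 <|
    Eventually.of_forall fun s hs => convPow_nonneg hψ₀ n hs.1.le)]
  exact (setLIntegral_convPow_le hψ hψ₀ T n).trans_lt (ENNReal.pow_lt_top hint.lintegral_lt_top)

lemma integral_convPow_le {ψ : ℝ → ℝ} (hψ : Measurable ψ) (hψ₀ : ∀ s, 0 ≤ ψ s)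
    {T : ℝ} (hT : 0 ≤ T) (hint : IntervalIntegrable ψ volume 0 T) (n : ℕ) :
    ∫ s in 0..T, convPow ψ n s ≤ (∫ s in 0..T, ψ s) ^ (n + 1) := by
  have hconv := intervalIntegrable_convPow hψ hψ₀ hT hint n
  rw [intervalIntegrable_iff_integrableOn_Ioc_of_le hT] at hint hconv
  rw [intervalIntegral.integral_of_le hT, intervalIntegral.integral_of_le hT,
    ← ENNReal.ofReal_le_ofReal_iff (pow_nonneg (setIntegral_nonneg measurableSet_Ioc
      fun s _ => hψ₀ s) _),
    ofReal_integral_eq_lintegral_ofReal hconv ((ae_restrict_iff' measurableSet_Ioc).2 <|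
      Eventually.of_forall fun s hs => convPow_nonneg hψ₀ n hs.1.le),
    ENNReal.ofReal_pow (setIntegral_nonneg measurableSet_Ioc fun s _ => hψ₀ s),
    ofReal_integral_eq_lintegral_ofReal hint (Eventually.of_forall hψ₀)]
  exact setLIntegral_convPow_le hψ hψ₀ T n

lemma integral_convPow_le_exp_mul {φ : ℝ → ℝ} (hφ : Measurable φ) (hφ₀ : ∀ s, 0 ≤ φ s)
    {T L : ℝ} (hT : 0 ≤ T) (hL : 0 ≤ L) (hint : IntervalIntegrable φ volume 0 T) (n : ℕ) :
    ∫ s in 0..T, convPow φ n s ≤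
      Real.exp (L * T) * (∫ s in 0..T, Real.exp (-L * s) * φ s) ^ (n + 1) := by
  set φL := fun s => Real.exp (-L * s) * φ s
  have hφL : Measurable φL := (by fun_prop : Measurable fun s : ℝ => Real.exp (-L * s)).mul hφ
  have hφL₀ : ∀ s, 0 ≤ φL s := fun s => mul_nonneg (Real.exp_nonneg _) (hφ₀ s)
  have hφL_int : IntervalIntegrable φL volume 0 T := hint.continuousOn_mul (by fun_prop)
  calc ∫ s in 0..T, convPow φ n s
      ≤ ∫ s in 0..T, Real.exp (L * T) * convPow φL n s := by
        refine intervalIntegral.integral_mono_on hT (intervalIntegrable_convPow hφ hφ₀ hT hint n)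
          ((intervalIntegrable_convPow hφL hφL₀ hT hφL_int n).const_mul _) fun s hs => ?_
        rw [convPow_exp_neg_mul, ← mul_assoc, ← Real.exp_add]
        refine le_mul_of_one_le_left (convPow_nonneg hφ₀ n hs.1) (Real.one_le_exp ?_)
        nlinarith [hs.2]
    _ = Real.exp (L * T) * ∫ s in 0..T, convPow φL n s := intervalIntegral.integral_const_mul _ _
    _ ≤ Real.exp (L * T) * (∫ s in 0..T, φL s) ^ (n + 1) := by
        gcongr
        exact integral_convPow_le hφL hφL₀ hT hφL_int n

lemma tendsto_integral_exp_neg_mul_atTop {φ : ℝ → ℝ} {T : ℝ} (hT : 0 ≤ T)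
    (hint : IntervalIntegrable φ volume 0 T) :
    Tendsto (fun L => ∫ s in 0..T, Real.exp (-L * s) * φ s) atTop (𝓝 0) := by
  have hlim := intervalIntegral.tendsto_integral_filter_of_dominated_convergence (l := atTop)
    (f := fun _ => (0 : ℝ)) (F := fun L s => Real.exp (-L * s) * φ s) (fun s => |φ s|)
    (Eventually.of_forall fun L => (hint.continuousOn_mul (by fun_prop)).def'.1) ?_ hint.abs ?_
  · simpa using hlim
  · filter_upwards [eventually_ge_atTop 0] with L hL
    refine Eventually.of_forall fun s hs => ?_
    rw [uIoc_of_le hT] at hs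
    rw [norm_mul, Real.norm_eq_abs, Real.abs_exp]
    refine mul_le_of_le_one_left (abs_nonneg _) (Real.exp_le_one_iff.2 ?_)
    nlinarith [hs.1]
  · refine Eventually.of_forall fun s hs => ?_
    rw [uIoc_of_le hT] at hs
    have : Tendsto (fun L : ℝ => -L * s) atTop atBot :=
      tendsto_neg_atTop_atBot.atBot_mul_const hs.1
    simpa using (Real.tendsto_exp_atBot.comp this).mul_const (φ s)

lemma summable_pow_mul_integral_convPow {φ : ℝ → ℝ} (hφ : Measurable φ) (hφ₀ : ∀ s, 0 ≤ φ s)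
    {T : ℝ} (hT : 0 ≤ T) (hint : IntervalIntegrable φ volume 0 T) {a : ℝ} (ha : 0 ≤ a) :
    Summable fun n : ℕ => a ^ (n + 1) * ∫ s in 0..T, convPow φ n s := by
  obtain ⟨L, hL, hρ⟩ : ∃ L : ℝ, 0 ≤ L ∧ a * ∫ s in 0..T, Real.exp (-L * s) * φ s < 1 := by
    have := ((tendsto_integral_exp_neg_mul_atTop hT hint).const_mul a).eventually_lt_const
      (by simp : a * 0 < 1)
    exact ((eventually_ge_atTop 0).and this).exists
  set ρ := ∫ s in 0..T, Real.exp (-L * s) * φ s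
  have hρ₀ : 0 ≤ ρ := intervalIntegral.integral_nonneg hT fun s _ =>
    mul_nonneg (Real.exp_nonneg _) (hφ₀ s)
  refine Summable.of_nonneg_of_le (fun n => mul_nonneg (pow_nonneg ha _)
      (intervalIntegral.integral_nonneg hT fun s hs => convPow_nonneg hφ₀ n hs.1)) (fun n => ?_)
    ((summable_geometric_of_lt_one (mul_nonneg ha hρ₀) hρ).mul_left (Real.exp (L * T) * (a * ρ)))
  calc a ^ (n + 1) * ∫ s in 0..T, convPow φ n s
      ≤ a ^ (n + 1) * (Real.exp (L * T) * ρ ^ (n + 1)) := by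
        gcongr
        exact integral_convPow_le_exp_mul hφ hφ₀ hT hL hint n
    _ = Real.exp (L * T) * (a * ρ) * (a * ρ) ^ n := by ring

theorem stmt13
    (A : ℝ)
    (φ : ℝ → ℝ) (hφmeas : Measurable φ) (hφnonneg : ∀ s, 0 ≤ φ s)
    (hφloc : ∀ t ≥ (0:ℝ), IntegrableOn φ (Set.Icc 0 t)) :
    (∀ t ≥ (0:ℝ),
      Summable (fun n : ℕ => |A| ^ (n + 1) * ∫ s in (0:ℝ)..t, convPow φ n s)) ∧
    (∀ t ≥ (0:ℝ), ∃ C, ∀ u ∈ Set.Icc (0:ℝ) t,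
      (∑' n : ℕ, |A| ^ (n + 1) * ∫ s in (0:ℝ)..u, convPow φ n s) ≤ C) := by
  have hint : ∀ t ≥ (0 : ℝ), IntervalIntegrable φ volume 0 t := fun t ht =>
    (intervalIntegrable_iff_integrableOn_Icc_of_le ht).2 (hφloc t ht)
  have hsum : ∀ t ≥ (0 : ℝ),
      Summable (fun n : ℕ => |A| ^ (n + 1) * ∫ s in (0:ℝ)..t, convPow φ n s) := fun t ht =>
    summable_pow_mul_integral_convPow hφmeas hφnonneg ht (hint t ht) (abs_nonneg A)
  refine ⟨hsum, fun t ht => ⟨_, fun u hu => (hsum u hu.1).tsum_le_tsum (fun n => ?_) (hsum t ht)⟩⟩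
  gcongr
  exact intervalIntegral.integral_mono_interval le_rfl hu.1 hu.2
    ((ae_restrict_iff' measurableSet_Ioc).2 <| Eventually.of_forall fun s hs =>
      convPow_nonneg hφnonneg n hs.1.le)
    (intervalIntegrable_convPow hφmeas hφnonneg ht (hint t ht) n)
end
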